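/- arXiv:2210.11521 — 7 statements merged into one kernel-verified Lean document; each statement's English description precedes it below -/
import Mathlib

section
/- Let G be a DAG on {1,...,p} with edges respecting the natural ordering, and let i, j be two vertices that are non-adjacent and have no common child in G. If the directed moralization G^{dm} gives i and j a common child k, then G contains as an induced subgraph on {i,j,k,l} (for some l > k > i,j) one of the two graphs {i→k, j→l, k→l} or {i→l, j→k, k→l}, or G contains as an induced subgraph on {i,j,k,l_1,l_2} (for some l_1,l_2 > k > i,j) the graph {i→l_1, j→l_2, k→l_1, k→l_2}. -/
/-- Two vertices are adjacent if there is an edge between them in either direction. -/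
def Adj {p : ℕ} (E : Fin p → Fin p → Prop) (u v : Fin p) : Prop := E u v ∨ E v u

/-- Directed moralization: add an edge `u → v` for every pair of non-adjacent
vertices `u < v` having a common child. -/
def dm {p : ℕ} (E : Fin p → Fin p → Prop) : Fin p → Fin p → Prop :=
  fun u v => E u v ∨ (u < v ∧ ¬ Adj E u v ∧ ∃ w, E u w ∧ E v w)

/-- The induced subgraph of `E` on `W` is exactly the edge relation `E'`. -/
def IndEq {p : ℕ} (E : Fin p → Fin p → Prop) (W : Set (Fin p))
    (E' : Fin p → Fin p → Prop) : Prop :=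
  ∀ a ∈ W, ∀ b ∈ W, (E a b ↔ E' a b)

section
variable {p : ℕ} {E : Fin p → Fin p → Prop}

/-- helper: induced subgraph {i→k, j→l, k→l} on {i,j,k,l} -/
theorem indeq_aux (hord : ∀ u v, E u v → u < v)
    (i j k l : Fin p) (hik : i < k) (hjk : j < k) (hkl : k < l)
    (e1 : E i k) (e2 : E j l) (e3 : E k l)
    (hij : i ≠ j) (n1 : ¬ E i j) (n2 : ¬ E j i) (n3 : ¬ E i l) (n4 : ¬ E j k) :
    (∀ a ∈ ({i, j, k, l} : Set (Fin p)), ∀ b ∈ ({i, j, k, l} : Set (Fin p)),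
      (E a b ↔ (a = i ∧ b = k) ∨ (a = j ∧ b = l) ∨ (a = k ∧ b = l))) := by
  have hil : i < l := hik.trans hkl
  have hjl : j < l := hjk.trans hkl
  have hno : ∀ u v : Fin p, v ≤ u → ¬ E u v := fun u v h he => absurd (hord u v he) (not_lt.mpr h)
  have m1 : ¬ E k i := hno _ _ hik.le
  have m2 : ¬ E k j := hno _ _ hjk.le
  have m3 : ¬ E l i := hno _ _ hil.le
  have m4 : ¬ E l j := hno _ _ hjl.le
  have m5 : ¬ E l k := hno _ _ hkl.le
  have s1 : ¬ E i i := hno _ _ le_rfl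
  have s2 : ¬ E j j := hno _ _ le_rfl
  have s3 : ¬ E k k := hno _ _ le_rfl
  have s4 : ¬ E l l := hno _ _ le_rfl
  have d0 : j ≠ i := hij.symm
  have d1 : i ≠ k := hik.ne
  have d2 : k ≠ i := hik.ne'
  have d3 : j ≠ k := hjk.ne
  have d4 : k ≠ j := hjk.ne'
  have d5 : i ≠ l := hil.ne
  have d6 : l ≠ i := hil.ne'
  have d7 : j ≠ l := hjl.ne
  have d8 : l ≠ j := hjl.ne'
  have d9 : k ≠ l := hkl.ne
  have d10 : l ≠ k := hkl.ne'
  intro a ha b hb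
  simp only [Set.mem_insert_iff, Set.mem_singleton_iff] at ha hb
  obtain rfl | rfl | rfl | rfl := ha <;> obtain rfl | rfl | rfl | rfl := hb <;>
    first | simp_all | tauto
end


section
variable {p : ℕ} {E : Fin p → Fin p → Prop}

theorem indeq_aux5 (hord : ∀ u v, E u v → u < v)
    (i j k l1 l2 : Fin p) (hik : i < k) (hjk : j < k) (hkl1 : k < l1) (hkl2 : k < l2)
    (hij : i ≠ j) (h12 : l1 ≠ l2)
    (e1 : E i l1) (e2 : E j l2) (e3 : E k l1) (e4 : E k l2)
    (n1 : ¬ E i j) (n2 : ¬ E j i) (n3 : ¬ E i k) (n4 : ¬ E j k)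
    (n5 : ¬ E i l2) (n6 : ¬ E j l1) (n7 : ¬ E l1 l2) (n8 : ¬ E l2 l1) :
    (∀ a ∈ ({i, j, k, l1, l2} : Set (Fin p)), ∀ b ∈ ({i, j, k, l1, l2} : Set (Fin p)),
      (E a b ↔ (a = i ∧ b = l1) ∨ (a = j ∧ b = l2) ∨ (a = k ∧ b = l1) ∨ (a = k ∧ b = l2))) := by
  have hil1 : i < l1 := hik.trans hkl1
  have hil2 : i < l2 := hik.trans hkl2
  have hjl1 : j < l1 := hjk.trans hkl1
  have hjl2 : j < l2 := hjk.trans hkl2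
  have hno : ∀ u v : Fin p, v ≤ u → ¬ E u v := fun u v h he => absurd (hord u v he) (not_lt.mpr h)
  have m1 : ¬ E k i := hno _ _ hik.le
  have m2 : ¬ E k j := hno _ _ hjk.le
  have m3 : ¬ E l1 i := hno _ _ hil1.le
  have m4 : ¬ E l1 j := hno _ _ hjl1.le
  have m5 : ¬ E l1 k := hno _ _ hkl1.le
  have m6 : ¬ E l2 i := hno _ _ hil2.le
  have m7 : ¬ E l2 j := hno _ _ hjl2.le
  have m8 : ¬ E l2 k := hno _ _ hkl2.le
  have s1 : ¬ E i i := hno _ _ le_rfl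
  have s2 : ¬ E j j := hno _ _ le_rfl
  have s3 : ¬ E k k := hno _ _ le_rfl
  have s4 : ¬ E l1 l1 := hno _ _ le_rfl
  have s5 : ¬ E l2 l2 := hno _ _ le_rfl
  have d0 : j ≠ i := hij.symm
  have d1 : i ≠ k := hik.ne
  have d2 : k ≠ i := hik.ne'
  have d3 : j ≠ k := hjk.ne
  have d4 : k ≠ j := hjk.ne'
  have d5 : i ≠ l1 := hil1.ne
  have d6 : l1 ≠ i := hil1.ne'
  have d7 : j ≠ l1 := hjl1.ne
  have d8 : l1 ≠ j := hjl1.ne'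
  have d9 : k ≠ l1 := hkl1.ne
  have d10 : l1 ≠ k := hkl1.ne'
  have d11 : i ≠ l2 := hil2.ne
  have d12 : l2 ≠ i := hil2.ne'
  have d13 : j ≠ l2 := hjl2.ne
  have d14 : l2 ≠ j := hjl2.ne'
  have d15 : k ≠ l2 := hkl2.ne
  have d16 : l2 ≠ k := hkl2.ne'
  have d17 : l2 ≠ l1 := h12.symm
  intro a ha b hb
  simp only [Set.mem_insert_iff, Set.mem_singleton_iff] at ha hb
  obtain rfl | rfl | rfl | rfl | rfl := ha <;> obtain rfl | rfl | rfl | rfl | rfl := hb <;>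
    simp_all
end



/-- If non-adjacent `i, j` with no common child in `G` acquire a common
child in the directed moralization, then `G` contains, as an induced subgraph, one of
the two graphs `{i→k, j→l, k→l}`, `{i→l, j→k, k→l}` (with `l > k > i,j`), or the graph
`{i→l₁, j→l₂, k→l₁, k→l₂}` (with `l₁,l₂ > k > i,j`). -/

theorem stmt4 {p : ℕ} (E : Fin p → Fin p → Prop)
    (hord : ∀ u v, E u v → u < v)
    (i j : Fin p) (hij : i ≠ j)
    (hnadj : ¬ Adj E i j)
    (hncc : ¬ ∃ w, E i w ∧ E j w)
    (hdm : ∃ k, dm E i k ∧ dm E j k) :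
    (∃ k l : Fin p, i < k ∧ j < k ∧ k < l ∧
      (IndEq E {i, j, k, l} (fun a b => (a = i ∧ b = k) ∨ (a = j ∧ b = l) ∨ (a = k ∧ b = l)) ∨
       IndEq E {i, j, k, l} (fun a b => (a = i ∧ b = l) ∨ (a = j ∧ b = k) ∨ (a = k ∧ b = l)))) ∨
    (∃ k l1 l2 : Fin p, i < k ∧ j < k ∧ k < l1 ∧ k < l2 ∧
      IndEq E {i, j, k, l1, l2}
        (fun a b => (a = i ∧ b = l1) ∨ (a = j ∧ b = l2) ∨ (a = k ∧ b = l1) ∨ (a = k ∧ b = l2))) := by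

  obtain ⟨k, hik, hjk⟩ := hdm
  have n1 : ¬ E i j := fun h => hnadj (Or.inl h)
  have n2 : ¬ E j i := fun h => hnadj (Or.inr h)
  rcases hik with hik_e | ⟨hik_lt, hik_na, l1, hil1, hkl1⟩
  · rcases hjk with hjk_e | ⟨hjk_lt, hjk_na, l, hjl, hkl⟩
    · exact absurd ⟨k, hik_e, hjk_e⟩ hncc
    · -- Case A : i→k real, j moral
      left
      refine ⟨k, l, hord _ _ hik_e, hjk_lt, hord _ _ hkl, Or.inl ?_⟩
      exact indeq_aux hord i j k l (hord _ _ hik_e) hjk_lt (hord _ _ hkl) hik_e hjl hkl hij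
        n1 n2 (fun h => hncc ⟨l, h, hjl⟩) (fun h => hjk_na (Or.inl h))
  · rcases hjk with hjk_e | ⟨hjk_lt, hjk_na, l2, hjl2, hkl2⟩
    · -- Case B : j→k real, i moral
      left
      refine ⟨k, l1, hik_lt, hord _ _ hjk_e, hord _ _ hkl1, Or.inr ?_⟩
      have h := indeq_aux hord j i k l1 (hord _ _ hjk_e) hik_lt (hord _ _ hkl1) hjk_e hil1 hkl1
        hij.symm n2 n1 (fun h => hncc ⟨l1, hil1, h⟩) (fun h => hik_na (Or.inl h))
      intro a ha b hb
      have ha' : a ∈ ({j, i, k, l1} : Set (Fin p)) := by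
        simp only [Set.mem_insert_iff, Set.mem_singleton_iff] at ha ⊢; tauto
      have hb' : b ∈ ({j, i, k, l1} : Set (Fin p)) := by
        simp only [Set.mem_insert_iff, Set.mem_singleton_iff] at hb ⊢; tauto
      exact (h a ha' b hb').trans (by tauto)
    · -- Case C : both moral
      have n5 : ¬ E i l2 := fun h => hncc ⟨l2, h, hjl2⟩
      have n6 : ¬ E j l1 := fun h => hncc ⟨l1, hil1, h⟩
      have h12ne : l1 ≠ l2 := fun h => hncc ⟨l2, h ▸ hil1, hjl2⟩
      by_cases h12 : E l1 l2
      · left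
        exact ⟨l1, l2, hord _ _ hil1, hjk_lt.trans (hord _ _ hkl1), hord _ _ h12, Or.inl
          (indeq_aux hord i j l1 l2 (hord _ _ hil1) (hjk_lt.trans (hord _ _ hkl1))
            (hord _ _ h12) hil1 hjl2 h12 hij n1 n2 n5 n6)⟩
      · by_cases h21 : E l2 l1
        · left
          refine ⟨l2, l1, hik_lt.trans (hord _ _ hkl2), hord _ _ hjl2, hord _ _ h21, Or.inr ?_⟩
          have h := indeq_aux hord j i l2 l1 (hord _ _ hjl2) (hik_lt.trans (hord _ _ hkl2))
            (hord _ _ h21) hjl2 hil1 h21 hij.symm n2 n1 n6 n5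
          intro a ha b hb
          have ha' : a ∈ ({j, i, l2, l1} : Set (Fin p)) := by
            simp only [Set.mem_insert_iff, Set.mem_singleton_iff] at ha ⊢; tauto
          have hb' : b ∈ ({j, i, l2, l1} : Set (Fin p)) := by
            simp only [Set.mem_insert_iff, Set.mem_singleton_iff] at hb ⊢; tauto
          exact (h a ha' b hb').trans (by tauto)
        · right
          exact ⟨k, l1, l2, hik_lt, hjk_lt, hord _ _ hkl1, hord _ _ hkl2,
            indeq_aux5 hord i j k l1 l2 hik_lt hjk_lt (hord _ _ hkl1) (hord _ _ hkl2)
              hij h12ne hil1 hjl2 hkl1 hkl2 n1 n2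
              (fun h => hik_na (Or.inl h)) (fun h => hjk_na (Or.inl h)) n5 n6 h12 h21⟩
end

section
/- Let G be a DAG on {1,...,p} with order-respecting edges, and let i, j be non-adjacent vertices with no common child such that n_1^{i,j}(G) = 0. If H is obtained from G by removing at least one edge from an induced subgraph on {i,j,k,l_1,l_2} of type (2) (edges i→l_1, j→l_2, k→l_1, k→l_2 with k > i,j and l_1,l_2 > k), then n_1^{i,j}(H) = 0 and n_2^{i,j}(H) < n_2^{i,j}(G). -/
/-- Type-(1) configuration for the pair `(i,j)` at `(k,l)`. -/
def Type1 {p : ℕ} (E : Fin p → Fin p → Prop) (i j k l : Fin p) : Prop :=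
  IndEq E {i, j, k, l} (fun a b => (a = i ∧ b = k) ∨ (a = j ∧ b = l) ∨ (a = k ∧ b = l)) ∨
  IndEq E {i, j, k, l} (fun a b => (a = i ∧ b = l) ∨ (a = j ∧ b = k) ∨ (a = k ∧ b = l))

/-- Type-(2) configuration for the pair `(i,j)` at `(k,l₁,l₂)`. -/
def Type2 {p : ℕ} (E : Fin p → Fin p → Prop) (i j k l1 l2 : Fin p) : Prop :=
  IndEq E {i, j, k, l1, l2}
    (fun a b => (a = i ∧ b = l1) ∨ (a = j ∧ b = l2) ∨ (a = k ∧ b = l1) ∨ (a = k ∧ b = l2))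

/-- `n₁^{i,j}(E)`. -/
noncomputable def n1 {p : ℕ} (E : Fin p → Fin p → Prop) (i j : Fin p) : ℕ :=
  Set.ncard {kl : Fin p × Fin p | i < kl.1 ∧ j < kl.1 ∧ kl.1 < kl.2 ∧ Type1 E i j kl.1 kl.2}

/-- `n₂^{i,j}(E)`. -/
noncomputable def n2 {p : ℕ} (E : Fin p → Fin p → Prop) (i j : Fin p) : ℕ :=
  Set.ncard {t : Fin p × Fin p × Fin p |
    i < t.1 ∧ j < t.1 ∧ t.1 < t.2.1 ∧ t.1 < t.2.2 ∧ Type2 E i j t.1 t.2.1 t.2.2}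

/-- Build a first-kind type-(1) induced-subgraph certificate from edge facts. -/
lemma mkT1 {p : ℕ} (E : Fin p → Fin p → Prop) (hord : ∀ u v, E u v → u < v)
    (i j c d : Fin p) (hic : i < c) (hjc : j < c) (hcd : c < d) (hij : i ≠ j)
    (e1 : E i c) (e2 : E j d) (e3 : E c d)
    (f1 : ¬ E i j) (f2 : ¬ E j i) (f3 : ¬ E i d) (f4 : ¬ E j c) :
    IndEq E {i, j, c, d} (fun a b => (a = i ∧ b = c) ∨ (a = j ∧ b = d) ∨ (a = c ∧ b = d)) := by
  have g1 : ¬ E i i := fun h => by have := hord _ _ h; omega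
  have g2 : ¬ E j j := fun h => by have := hord _ _ h; omega
  have g3 : ¬ E c c := fun h => by have := hord _ _ h; omega
  have g4 : ¬ E d d := fun h => by have := hord _ _ h; omega
  have g5 : ¬ E c i := fun h => by have := hord _ _ h; omega
  have g6 : ¬ E c j := fun h => by have := hord _ _ h; omega
  have g7 : ¬ E d i := fun h => by have := hord _ _ h; omega
  have g8 : ¬ E d j := fun h => by have := hord _ _ h; omega
  have g9 : ¬ E d c := fun h => by have := hord _ _ h; omega
  have n1 : i ≠ c := ne_of_lt hic
  have n2 : j ≠ c := ne_of_lt hjc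
  have n3 : c ≠ d := ne_of_lt hcd
  have n4 : i ≠ d := ne_of_lt (hic.trans hcd)
  have n5 : j ≠ d := ne_of_lt (hjc.trans hcd)
  intro a ha b hb
  simp only [Set.mem_insert_iff, Set.mem_singleton_iff] at ha hb
  rcases ha with rfl | rfl | rfl | rfl <;> rcases hb with rfl | rfl | rfl | rfl <;>
    simp_all <;> omega

/-- Build a second-kind type-(1) induced-subgraph certificate from edge facts. -/
lemma mkT1b {p : ℕ} (E : Fin p → Fin p → Prop) (hord : ∀ u v, E u v → u < v)
    (i j c d : Fin p) (hic : i < c) (hjc : j < c) (hcd : c < d) (hij : i ≠ j)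
    (e1 : E i d) (e2 : E j c) (e3 : E c d)
    (f1 : ¬ E i j) (f2 : ¬ E j i) (f3 : ¬ E i c) (f4 : ¬ E j d) :
    IndEq E {i, j, c, d} (fun a b => (a = i ∧ b = d) ∨ (a = j ∧ b = c) ∨ (a = c ∧ b = d)) := by
  have g1 : ¬ E i i := fun h => by have := hord _ _ h; omega
  have g2 : ¬ E j j := fun h => by have := hord _ _ h; omega
  have g3 : ¬ E c c := fun h => by have := hord _ _ h; omega
  have g4 : ¬ E d d := fun h => by have := hord _ _ h; omega
  have g5 : ¬ E c i := fun h => by have := hord _ _ h; omega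
  have g6 : ¬ E c j := fun h => by have := hord _ _ h; omega
  have g7 : ¬ E d i := fun h => by have := hord _ _ h; omega
  have g8 : ¬ E d j := fun h => by have := hord _ _ h; omega
  have g9 : ¬ E d c := fun h => by have := hord _ _ h; omega
  have n1 : i ≠ c := ne_of_lt hic
  have n2 : j ≠ c := ne_of_lt hjc
  have n3 : c ≠ d := ne_of_lt hcd
  have n4 : i ≠ d := ne_of_lt (hic.trans hcd)
  have n5 : j ≠ d := ne_of_lt (hjc.trans hcd)
  intro a ha b hb
  simp only [Set.mem_insert_iff, Set.mem_singleton_iff] at ha hb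
  rcases ha with rfl | rfl | rfl | rfl <;> rcases hb with rfl | rfl | rfl | rfl <;>
    simp_all <;> omega

/-- If `n₁^{i,j}(G) = 0` and `H` is obtained from `G` by removing at least
one edge of a type-(2) induced subgraph on `{i,j,k,l₁,l₂}`, then `n₁^{i,j}(H) = 0` and
`n₂^{i,j}(H) < n₂^{i,j}(G)`. -/
theorem stmt6 {p : ℕ} (E H : Fin p → Fin p → Prop)
    (hord : ∀ u v, E u v → u < v)
    (i j : Fin p) (hij : i ≠ j)
    (hnadj : ¬ (E i j ∨ E j i))
    (hncc : ¬ ∃ w, E i w ∧ E j w)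
    (hn1 : n1 E i j = 0)
    (k l1 l2 : Fin p) (hik : i < k) (hjk : j < k) (hkl1 : k < l1) (hkl2 : k < l2)
    (htype : Type2 E i j k l1 l2)
    (hsub : ∀ a b, H a b → E a b)
    (houtside : ∀ a b, E a b → ¬ H a b →
      a ∈ ({i, j, k, l1, l2} : Set (Fin p)) ∧ b ∈ ({i, j, k, l1, l2} : Set (Fin p)))
    (hremoved : ∃ a b, a ∈ ({i, j, k, l1, l2} : Set (Fin p)) ∧
      b ∈ ({i, j, k, l1, l2} : Set (Fin p)) ∧ E a b ∧ ¬ H a b) :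
    n1 H i j = 0 ∧ n2 H i j < n2 E i j := by
  classical
  have hEij : ¬ E i j := fun h => hnadj (Or.inl h)
  have hEji : ¬ E j i := fun h => hnadj (Or.inr h)
  have iW : i ∈ ({i, j, k, l1, l2} : Set (Fin p)) := by simp
  have jW : j ∈ ({i, j, k, l1, l2} : Set (Fin p)) := by simp
  have l1W : l1 ∈ ({i, j, k, l1, l2} : Set (Fin p)) := by simp
  have l2W : l2 ∈ ({i, j, k, l1, l2} : Set (Fin p)) := by simp
  have hEil1 : E i l1 := (htype i iW l1 l1W).mpr (Or.inl ⟨rfl, rfl⟩)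
  have hEjl2 : E j l2 := (htype j jW l2 l2W).mpr (Or.inr (Or.inl ⟨rfl, rfl⟩))
  have hl12 : l1 ≠ l2 := fun h => hncc ⟨l2, h ▸ hEil1, hEjl2⟩
  have hdiff : ∀ a b, E a b → ¬ H a b →
      (a = i ∧ b = l1) ∨ (a = j ∧ b = l2) ∨ (a = k ∧ b = l1) ∨ (a = k ∧ b = l2) := by
    intro a b hE hH
    obtain ⟨ha, hb⟩ := houtside a b hE hH
    exact (htype a ha b hb).mp hE
  have hn1' : ∀ c d, i < c → j < c → c < d → ¬ Type1 E i j c d := by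
    intro c d h1 h2 h3 hT
    have he : {kl : Fin p × Fin p |
        i < kl.1 ∧ j < kl.1 ∧ kl.1 < kl.2 ∧ Type1 E i j kl.1 kl.2} = ∅ :=
      (Set.ncard_eq_zero (Set.toFinite _)).mp hn1
    have hm : (c, d) ∈ {kl : Fin p × Fin p |
        i < kl.1 ∧ j < kl.1 ∧ kl.1 < kl.2 ∧ Type1 E i j kl.1 kl.2} := ⟨h1, h2, h3, hT⟩
    rw [he] at hm
    exact hm
  -- Part 1 : the type-1 set of H is empty
  have hH1 : {kl : Fin p × Fin p |
      i < kl.1 ∧ j < kl.1 ∧ kl.1 < kl.2 ∧ Type1 H i j kl.1 kl.2} = ∅ := by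
    ext ⟨c, d⟩
    simp only [Set.mem_setOf_eq, Set.mem_empty_iff_false, iff_false, not_and]
    intro h1 h2 h3 hT
    have iQ : i ∈ ({i, j, c, d} : Set (Fin p)) := by simp
    have jQ : j ∈ ({i, j, c, d} : Set (Fin p)) := by simp
    have cQ : c ∈ ({i, j, c, d} : Set (Fin p)) := by simp
    have dQ : d ∈ ({i, j, c, d} : Set (Fin p)) := by simp
    unfold Type1 at hT
    rcases hT with hInd | hInd
    · have hHic : H i c := (hInd i iQ c cQ).mpr (Or.inl ⟨rfl, rfl⟩)
      have hHjd : H j d := (hInd j jQ d dQ).mpr (Or.inr (Or.inl ⟨rfl, rfl⟩))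
      have hHcd : H c d := (hInd c cQ d dQ).mpr (Or.inr (Or.inr ⟨rfl, rfl⟩))
      have hnod : ∀ a ∈ ({i, j, c, d} : Set (Fin p)), ∀ b ∈ ({i, j, c, d} : Set (Fin p)),
          E a b → H a b := by
        intro a ha b hb hE
        by_contra hH
        simp only [Set.mem_insert_iff, Set.mem_singleton_iff] at ha hb
        rcases hdiff a b hE hH with ⟨rfl, rfl⟩ | ⟨rfl, rfl⟩ | ⟨rfl, rfl⟩ | ⟨rfl, rfl⟩
        · rcases hb with rfl | rfl | rfl | rfl
          · omega
          · omega
          · exact hH hHic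
          · exact hncc ⟨_, hE, hsub _ _ hHjd⟩
        · rcases hb with rfl | rfl | rfl | rfl
          · omega
          · omega
          · exact hncc ⟨_, hsub _ _ hHic, hE⟩
          · exact hH hHjd
        · rcases ha with rfl | rfl | rfl | rfl <;> rcases hb with rfl | rfl | rfl | rfl <;>
            first | omega | exact hH hHcd
        · rcases ha with rfl | rfl | rfl | rfl <;> rcases hb with rfl | rfl | rfl | rfl <;>
            first | omega | exact hH hHcd
      exact hn1' c d h1 h2 h3 (Or.inl (fun a ha b hb =>
        ⟨fun hE => (hInd a ha b hb).mp (hnod a ha b hb hE),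
         fun hp => hsub a b ((hInd a ha b hb).mpr hp)⟩))
    · have hHid : H i d := (hInd i iQ d dQ).mpr (Or.inl ⟨rfl, rfl⟩)
      have hHjc : H j c := (hInd j jQ c cQ).mpr (Or.inr (Or.inl ⟨rfl, rfl⟩))
      have hHcd : H c d := (hInd c cQ d dQ).mpr (Or.inr (Or.inr ⟨rfl, rfl⟩))
      have hnod : ∀ a ∈ ({i, j, c, d} : Set (Fin p)), ∀ b ∈ ({i, j, c, d} : Set (Fin p)),
          E a b → H a b := by
        intro a ha b hb hE
        by_contra hH
        simp only [Set.mem_insert_iff, Set.mem_singleton_iff] at ha hb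
        rcases hdiff a b hE hH with ⟨rfl, rfl⟩ | ⟨rfl, rfl⟩ | ⟨rfl, rfl⟩ | ⟨rfl, rfl⟩
        · rcases hb with rfl | rfl | rfl | rfl
          · omega
          · omega
          · exact hncc ⟨_, hE, hsub _ _ hHjc⟩
          · exact hH hHid
        · rcases hb with rfl | rfl | rfl | rfl
          · omega
          · omega
          · exact hH hHjc
          · exact hncc ⟨_, hsub _ _ hHid, hE⟩
        · rcases ha with rfl | rfl | rfl | rfl <;> rcases hb with rfl | rfl | rfl | rfl <;>
            first | omega | exact hH hHcd
        · rcases ha with rfl | rfl | rfl | rfl <;> rcases hb with rfl | rfl | rfl | rfl <;>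
            first | omega | exact hH hHcd
      exact hn1' c d h1 h2 h3 (Or.inr (fun a ha b hb =>
        ⟨fun hE => (hInd a ha b hb).mp (hnod a ha b hb hE),
         fun hp => hsub a b ((hInd a ha b hb).mpr hp)⟩))
  -- Part 2 : strict subset of type-2 sets
  have hss : {t : Fin p × Fin p × Fin p |
        i < t.1 ∧ j < t.1 ∧ t.1 < t.2.1 ∧ t.1 < t.2.2 ∧ Type2 H i j t.1 t.2.1 t.2.2} ⊂
      {t : Fin p × Fin p × Fin p |
        i < t.1 ∧ j < t.1 ∧ t.1 < t.2.1 ∧ t.1 < t.2.2 ∧ Type2 E i j t.1 t.2.1 t.2.2} := by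
    constructor
    · rintro ⟨c, m1, m2⟩ ⟨h1, h2, h3, h4, hInd⟩
      replace h1 : i < c := h1
      replace h2 : j < c := h2
      replace h3 : c < m1 := h3
      replace h4 : c < m2 := h4
      replace hInd : Type2 H i j c m1 m2 := hInd
      refine ⟨h1, h2, h3, h4, ?_⟩
      show Type2 E i j c m1 m2
      unfold Type2 IndEq at hInd ⊢
      have iQ : i ∈ ({i, j, c, m1, m2} : Set (Fin p)) := by simp
      have jQ : j ∈ ({i, j, c, m1, m2} : Set (Fin p)) := by simp
      have cQ : c ∈ ({i, j, c, m1, m2} : Set (Fin p)) := by simp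
      have m1Q : m1 ∈ ({i, j, c, m1, m2} : Set (Fin p)) := by simp
      have m2Q : m2 ∈ ({i, j, c, m1, m2} : Set (Fin p)) := by simp
      have hHim1 : H i m1 := (hInd i iQ m1 m1Q).mpr (Or.inl ⟨rfl, rfl⟩)
      have hHjm2 : H j m2 := (hInd j jQ m2 m2Q).mpr (Or.inr (Or.inl ⟨rfl, rfl⟩))
      have hHcm1 : H c m1 := (hInd c cQ m1 m1Q).mpr (Or.inr (Or.inr (Or.inl ⟨rfl, rfl⟩)))
      have hHcm2 : H c m2 := (hInd c cQ m2 m2Q).mpr (Or.inr (Or.inr (Or.inr ⟨rfl, rfl⟩)))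
      have hm12 : m1 ≠ m2 := fun h => hncc ⟨m2, h ▸ hsub _ _ hHim1, hsub _ _ hHjm2⟩
      have hnod : ∀ a ∈ ({i, j, c, m1, m2} : Set (Fin p)),
          ∀ b ∈ ({i, j, c, m1, m2} : Set (Fin p)), E a b → H a b := by
        intro a ha b hb hE
        by_contra hH
        simp only [Set.mem_insert_iff, Set.mem_singleton_iff] at ha hb
        rcases hdiff a b hE hH with ⟨rfl, rfl⟩ | ⟨rfl, rfl⟩ | ⟨rfl, rfl⟩ | ⟨rfl, rfl⟩
        · -- removed edge is (i, l1)
          rcases hb with rfl | rfl | rfl | rfl | rfl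
          · omega
          · omega
          · -- l1 = c : type-1 (first kind) configuration of E at (c, m2)
            have nEim2 : ¬ E a m2 := by
              intro h'
              by_cases hh : H a m2
              · rcases (hInd a iQ m2 m2Q).mp hh with ⟨h5, h6⟩ | ⟨h5, h6⟩ | ⟨h5, h6⟩ | ⟨h5, h6⟩ <;>
                  omega
              · rcases hdiff a m2 h' hh with ⟨h5, h6⟩ | ⟨h5, h6⟩ | ⟨h5, h6⟩ | ⟨h5, h6⟩ <;> omega
            have nEjc : ¬ E j b := by
              intro h'
              by_cases hh : H j b
              · rcases (hInd j jQ b cQ).mp hh with ⟨h5, h6⟩ | ⟨h5, h6⟩ | ⟨h5, h6⟩ | ⟨h5, h6⟩ <;>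
                  omega
              · rcases hdiff j b h' hh with ⟨h5, h6⟩ | ⟨h5, h6⟩ | ⟨h5, h6⟩ | ⟨h5, h6⟩ <;> omega
            exact hn1' _ _ h1 h2 h4 (Or.inl (mkT1 E hord _ _ _ _ h1 h2 h4 hij hE
              (hsub _ _ hHjm2) (hsub _ _ hHcm2) hEij hEji nEim2 nEjc))
          · exact hH hHim1
          · exact hncc ⟨_, hE, hsub _ _ hHjm2⟩
        · -- removed edge is (j, l2)
          rcases hb with rfl | rfl | rfl | rfl | rfl
          · omega
          · omega
          · -- l2 = c : type-1 (second kind) configuration of E at (c, m1)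
            have nEic : ¬ E i b := by
              intro h'
              by_cases hh : H i b
              · rcases (hInd i iQ b cQ).mp hh with ⟨h5, h6⟩ | ⟨h5, h6⟩ | ⟨h5, h6⟩ | ⟨h5, h6⟩ <;>
                  omega
              · rcases hdiff i b h' hh with ⟨h5, h6⟩ | ⟨h5, h6⟩ | ⟨h5, h6⟩ | ⟨h5, h6⟩ <;> omega
            have nEjm1 : ¬ E a m1 := by
              intro h'
              by_cases hh : H a m1
              · rcases (hInd a jQ m1 m1Q).mp hh with ⟨h5, h6⟩ | ⟨h5, h6⟩ | ⟨h5, h6⟩ | ⟨h5, h6⟩ <;>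
                  omega
              · rcases hdiff a m1 h' hh with ⟨h5, h6⟩ | ⟨h5, h6⟩ | ⟨h5, h6⟩ | ⟨h5, h6⟩ <;> omega
            exact hn1' _ _ h1 h2 h3 (Or.inr (mkT1b E hord _ _ _ _ h1 h2 h3 hij
              (hsub _ _ hHim1) hE (hsub _ _ hHcm1) hEij hEji nEic nEjm1))
          · exact hncc ⟨_, hsub _ _ hHim1, hE⟩
          · exact hH hHjm2
        · -- removed edge is (k, l1)
          rcases ha with rfl | rfl | rfl | rfl | rfl
          · omega
          · omega
          · rcases hb with rfl | rfl | rfl | rfl | rfl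
            · omega
            · omega
            · omega
            · exact hH hHcm1
            · exact hncc ⟨_, hEil1, hsub _ _ hHjm2⟩
          · rcases hb with rfl | rfl | rfl | rfl | rfl
            · omega
            · omega
            · omega
            · omega
            · exact hncc ⟨_, hEil1, hsub _ _ hHjm2⟩
          · rcases hb with rfl | rfl | rfl | rfl | rfl
            · omega
            · omega
            · omega
            · -- k = m2, l1 = m1 : type-1 (second kind) configuration of E at (k, l1)
              have f3 : ¬ E i a := by
                intro h'
                by_cases hh : H i a
                · rcases (hInd i iQ a m2Q).mp hh with ⟨h5, h6⟩ | ⟨h5, h6⟩ | ⟨h5, h6⟩ | ⟨h5, h6⟩ <;>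
                    omega
                · rcases hdiff i a h' hh with ⟨h5, h6⟩ | ⟨h5, h6⟩ | ⟨h5, h6⟩ | ⟨h5, h6⟩ <;> omega
              have f4 : ¬ E j b := by
                intro h'
                by_cases hh : H j b
                · rcases (hInd j jQ b m1Q).mp hh with ⟨h5, h6⟩ | ⟨h5, h6⟩ | ⟨h5, h6⟩ | ⟨h5, h6⟩ <;>
                    omega
                · rcases hdiff j b h' hh with ⟨h5, h6⟩ | ⟨h5, h6⟩ | ⟨h5, h6⟩ | ⟨h5, h6⟩ <;> omega
              exact hn1' _ _ hik hjk hkl1 (Or.inr (mkT1b E hord _ _ _ _ hik hjk hkl1 hij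
                hEil1 (hsub _ _ hHjm2) hE hEij hEji f3 f4))
            · omega
        · -- removed edge is (k, l2)
          rcases ha with rfl | rfl | rfl | rfl | rfl
          · omega
          · omega
          · rcases hb with rfl | rfl | rfl | rfl | rfl
            · omega
            · omega
            · omega
            · exact hncc ⟨_, hsub _ _ hHim1, hEjl2⟩
            · exact hH hHcm2
          · rcases hb with rfl | rfl | rfl | rfl | rfl
            · omega
            · omega
            · omega
            · omega
            · -- k = m1, l2 = m2 : type-1 (first kind) configuration of E at (k, l2)
              have f3 : ¬ E i b := by
                intro h'
                by_cases hh : H i b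
                · rcases (hInd i iQ b m2Q).mp hh with ⟨h5, h6⟩ | ⟨h5, h6⟩ | ⟨h5, h6⟩ | ⟨h5, h6⟩ <;>
                    omega
                · rcases hdiff i b h' hh with ⟨h5, h6⟩ | ⟨h5, h6⟩ | ⟨h5, h6⟩ | ⟨h5, h6⟩ <;> omega
              have f4 : ¬ E j a := by
                intro h'
                by_cases hh : H j a
                · rcases (hInd j jQ a m1Q).mp hh with ⟨h5, h6⟩ | ⟨h5, h6⟩ | ⟨h5, h6⟩ | ⟨h5, h6⟩ <;>
                    omega
                · rcases hdiff j a h' hh with ⟨h5, h6⟩ | ⟨h5, h6⟩ | ⟨h5, h6⟩ | ⟨h5, h6⟩ <;> omega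
              exact hn1' _ _ hik hjk hkl2 (Or.inl (mkT1 E hord _ _ _ _ hik hjk hkl2 hij
                (hsub _ _ hHim1) hEjl2 hE hEij hEji f3 f4))
          · rcases hb with rfl | rfl | rfl | rfl | rfl
            · omega
            · omega
            · omega
            · exact hncc ⟨_, hsub _ _ hHim1, hEjl2⟩
            · omega
      intro a ha b hb
      exact ⟨fun hE => (hInd a ha b hb).mp (hnod a ha b hb hE),
             fun hp => hsub a b ((hInd a ha b hb).mpr hp)⟩
    · intro hcon
      have hmem : (⟨k, l1, l2⟩ : Fin p × Fin p × Fin p) ∈ {t : Fin p × Fin p × Fin p |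
          i < t.1 ∧ j < t.1 ∧ t.1 < t.2.1 ∧ t.1 < t.2.2 ∧ Type2 E i j t.1 t.2.1 t.2.2} :=
        ⟨hik, hjk, hkl1, hkl2, htype⟩
      obtain ⟨-, -, -, -, hInd⟩ := hcon hmem
      obtain ⟨a, b, haW, hbW, hEab, hHab⟩ := hremoved
      exact hHab ((hInd a haW b hbW).mpr ((htype a haW b hbW).mp hEab))
  constructor
  · unfold n1
    rw [hH1]
    exact Set.ncard_empty _
  · unfold n2
    exact Set.ncard_lt_ncard hss (Set.toFinite _)
end

section
/- Let G be a DAG on {1,...,p} with order-respecting edges and let i, j be non-adjacent vertices with no common child (so the saturated d-separation statement X_i ⊥ X_j | X_{[p]\{i,j}} holds in G). This statement fails in the directed moralization G^{dm} (i.e., i and j acquire a common child or become adjacent) if and only if G contains one of the following as an induced subgraph: on some {i,j,k,l} with k > i,j, l > k the graph {i→k, j→l, k→l} or {i→l, j→k, k→l}; or on some {i,j,k,l_1,l_2} with k > i,j and l_1,l_2 > k the graph {i→l_1, j→l_2, k→l_1, k→l_2}. -/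
/-- For non-adjacent `i, j` with no common child (so the saturated
statement `X_i ⊥ X_j | X_rest` holds in `G`), the statement fails in the directed
moralization (`i`, `j` become adjacent or acquire a common child) iff `G` contains one
of the type-(1) or type-(2) graphs as an induced subgraph. -/
theorem stmt7 {p : ℕ} (E : Fin p → Fin p → Prop)
    (hord : ∀ u v, E u v → u < v)
    (i j : Fin p) (hij : i ≠ j)
    (hnadj : ¬ Adj E i j)
    (hncc : ¬ ∃ w, E i w ∧ E j w) :
    (Adj (dm E) i j ∨ ∃ k, dm E i k ∧ dm E j k) ↔
      ((∃ k l : Fin p, i < k ∧ j < k ∧ k < l ∧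
        (IndEq E {i, j, k, l} (fun a b => (a = i ∧ b = k) ∨ (a = j ∧ b = l) ∨ (a = k ∧ b = l)) ∨
         IndEq E {i, j, k, l} (fun a b => (a = i ∧ b = l) ∨ (a = j ∧ b = k) ∨ (a = k ∧ b = l)))) ∨
      (∃ k l1 l2 : Fin p, i < k ∧ j < k ∧ k < l1 ∧ k < l2 ∧
        IndEq E {i, j, k, l1, l2}
          (fun a b => (a = i ∧ b = l1) ∨ (a = j ∧ b = l2) ∨ (a = k ∧ b = l1) ∨ (a = k ∧ b = l2)))) := by
  have hirr : ∀ u : Fin p, ¬ E u u := fun u h => lt_irrefl u (hord u u h)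
  have hgt : ∀ u v : Fin p, v < u → ¬ E u v := fun u v hvu h => lt_asymm hvu (hord u v h)
  have hnij : ¬ E i j := fun h => hnadj (Or.inl h)
  have hnji : ¬ E j i := fun h => hnadj (Or.inr h)
  constructor
  · rintro (h | ⟨k, hik, hjk⟩)
    · exfalso
      rcases h with h | h <;> rcases h with h | ⟨_, _, w, hw1, hw2⟩
      · exact hnij h
      · exact hncc ⟨w, hw1, hw2⟩
      · exact hnji h
      · exact hncc ⟨w, hw2, hw1⟩
    · rcases hik with hik | ⟨hik_lt, hnik, l1, hil1, hkl1⟩ <;>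
      rcases hjk with hjk | ⟨hjk_lt, hnjk, l2, hjl2, hkl2⟩
      · exact absurd ⟨k, hik, hjk⟩ hncc
      · -- E i k, moral j via l2 : edges i→k, j→l2, k→l2
        have hik_lt : i < k := hord _ _ hik
        have hkl_lt : k < l2 := hord _ _ hkl2
        have hil_lt : i < l2 := hik_lt.trans hkl_lt
        have hjl_lt : j < l2 := hjk_lt.trans hkl_lt
        have hnjk' : ¬ E j k := fun h => hnjk (Or.inl h)
        have hnkj : ¬ E k j := fun h => hnjk (Or.inr h)
        have hnil : ¬ E i l2 := fun h => hncc ⟨l2, h, hjl2⟩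
        have s1 := hirr i; have s2 := hirr j; have s3 := hirr k; have s4 := hirr l2
        have g1 := hgt k i hik_lt; have g2 := hgt l2 i hil_lt
        have g3 := hgt l2 j hjl_lt; have g4 := hgt l2 k hkl_lt
        have hij' := hij; have hij'' := hij.symm
        refine Or.inl ⟨k, l2, hik_lt, hjk_lt, hkl_lt, Or.inl ?_⟩
        intro a ha b hb
        simp only [Set.mem_insert_iff, Set.mem_singleton_iff] at ha hb
        rcases ha with rfl | rfl | rfl | rfl <;> rcases hb with rfl | rfl | rfl | rfl <;>
          simp [hik, hjl2, hkl2, hnij, hnji, hnjk', hnkj, hnil,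
            s1, s2, s3, s4, g1, g2, g3, g4,
            hij', hij'', hik_lt.ne, hik_lt.ne', hjk_lt.ne, hjk_lt.ne',
            hkl_lt.ne, hkl_lt.ne', hil_lt.ne, hil_lt.ne', hjl_lt.ne, hjl_lt.ne']
      · -- moral i via l1, E j k : edges i→l1, j→k, k→l1
        have hjk_lt : j < k := hord _ _ hjk
        have hkl_lt : k < l1 := hord _ _ hkl1
        have hil_lt : i < l1 := hik_lt.trans hkl_lt
        have hjl_lt : j < l1 := hjk_lt.trans hkl_lt
        have hnik' : ¬ E i k := fun h => hnik (Or.inl h)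
        have hnki : ¬ E k i := fun h => hnik (Or.inr h)
        have hnjl : ¬ E j l1 := fun h => hncc ⟨l1, hil1, h⟩
        have s1 := hirr i; have s2 := hirr j; have s3 := hirr k; have s4 := hirr l1
        have g1 := hgt k j hjk_lt; have g2 := hgt l1 i hil_lt
        have g3 := hgt l1 j hjl_lt; have g4 := hgt l1 k hkl_lt
        have hij' := hij; have hij'' := hij.symm
        refine Or.inl ⟨k, l1, hik_lt, hjk_lt, hkl_lt, Or.inr ?_⟩
        intro a ha b hb
        simp only [Set.mem_insert_iff, Set.mem_singleton_iff] at ha hb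
        rcases ha with rfl | rfl | rfl | rfl <;> rcases hb with rfl | rfl | rfl | rfl <;>
          simp [hil1, hjk, hkl1, hnij, hnji, hnik', hnki, hnjl,
            s1, s2, s3, s4, g1, g2, g3, g4,
            hij', hij'', hik_lt.ne, hik_lt.ne', hjk_lt.ne, hjk_lt.ne',
            hkl_lt.ne, hkl_lt.ne', hil_lt.ne, hil_lt.ne', hjl_lt.ne, hjl_lt.ne']
      · -- both moral: i via l1, j via l2
        have hkl1_lt : k < l1 := hord _ _ hkl1
        have hkl2_lt : k < l2 := hord _ _ hkl2
        have hil1_lt : i < l1 := hik_lt.trans hkl1_lt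
        have hjl1_lt : j < l1 := hjk_lt.trans hkl1_lt
        have hil2_lt : i < l2 := hik_lt.trans hkl2_lt
        have hjl2_lt : j < l2 := hjk_lt.trans hkl2_lt
        have hnik' : ¬ E i k := fun h => hnik (Or.inl h)
        have hnki : ¬ E k i := fun h => hnik (Or.inr h)
        have hnjk' : ¬ E j k := fun h => hnjk (Or.inl h)
        have hnkj : ¬ E k j := fun h => hnjk (Or.inr h)
        have hnil2 : ¬ E i l2 := fun h => hncc ⟨l2, h, hjl2⟩
        have hnjl1 : ¬ E j l1 := fun h => hncc ⟨l1, hil1, h⟩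
        have hne12 : l1 ≠ l2 := fun h => hncc ⟨l1, hil1, h ▸ hjl2⟩
        by_cases h12 : E l1 l2
        · -- type 1, first, with k := l1, l := l2
          have h12_lt : l1 < l2 := hord _ _ h12
          have s1 := hirr i; have s2 := hirr j; have s3 := hirr l1; have s4 := hirr l2
          have g1 := hgt l1 i hil1_lt; have g2 := hgt l1 j hjl1_lt
          have g3 := hgt l2 i hil2_lt; have g4 := hgt l2 j hjl2_lt
          have g5 := hgt l2 l1 h12_lt
          have hij' := hij; have hij'' := hij.symm
          refine Or.inl ⟨l1, l2, hil1_lt, hjl1_lt, h12_lt, Or.inl ?_⟩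
          intro a ha b hb
          simp only [Set.mem_insert_iff, Set.mem_singleton_iff] at ha hb
          rcases ha with rfl | rfl | rfl | rfl <;> rcases hb with rfl | rfl | rfl | rfl <;>
            simp [hil1, hjl2, h12, hnij, hnji, hnil2, hnjl1,
              s1, s2, s3, s4, g1, g2, g3, g4, g5,
              hij', hij'', hil1_lt.ne, hil1_lt.ne', hjl1_lt.ne, hjl1_lt.ne',
              hil2_lt.ne, hil2_lt.ne', hjl2_lt.ne, hjl2_lt.ne', h12_lt.ne, h12_lt.ne']
        · by_cases h21 : E l2 l1
          · -- type 1, second, with k := l2, l := l1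
            have h21_lt : l2 < l1 := hord _ _ h21
            have s1 := hirr i; have s2 := hirr j; have s3 := hirr l1; have s4 := hirr l2
            have g1 := hgt l1 i hil1_lt; have g2 := hgt l1 j hjl1_lt
            have g3 := hgt l2 i hil2_lt; have g4 := hgt l2 j hjl2_lt
            have hij' := hij; have hij'' := hij.symm
            refine Or.inl ⟨l2, l1, hil2_lt, hjl2_lt, h21_lt, Or.inr ?_⟩
            intro a ha b hb
            simp only [Set.mem_insert_iff, Set.mem_singleton_iff] at ha hb
            rcases ha with rfl | rfl | rfl | rfl <;> rcases hb with rfl | rfl | rfl | rfl <;>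
              simp [hil1, hjl2, h21, hnij, hnji, hnil2, hnjl1, h12,
                s1, s2, s3, s4, g1, g2, g3, g4,
                hij', hij'', hil1_lt.ne, hil1_lt.ne', hjl1_lt.ne, hjl1_lt.ne',
                hil2_lt.ne, hil2_lt.ne', hjl2_lt.ne, hjl2_lt.ne', h21_lt.ne, h21_lt.ne']
          · -- type 2
            have s1 := hirr i; have s2 := hirr j; have s3 := hirr k
            have s4 := hirr l1; have s5 := hirr l2
            have g1 := hgt k i hik_lt; have g2 := hgt k j hjk_lt
            have g3 := hgt l1 i hil1_lt; have g4 := hgt l1 j hjl1_lt; have g5 := hgt l1 k hkl1_lt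
            have g6 := hgt l2 i hil2_lt; have g7 := hgt l2 j hjl2_lt; have g8 := hgt l2 k hkl2_lt
            have hij' := hij; have hij'' := hij.symm
            have hne12' := hne12.symm
            refine Or.inr ⟨k, l1, l2, hik_lt, hjk_lt, hkl1_lt, hkl2_lt, ?_⟩
            intro a ha b hb
            simp only [Set.mem_insert_iff, Set.mem_singleton_iff] at ha hb
            rcases ha with rfl | rfl | rfl | rfl | rfl <;> rcases hb with rfl | rfl | rfl | rfl | rfl <;>
              simp [hil1, hjl2, hkl1, hkl2, hnij, hnji, hnik', hnki, hnjk', hnkj,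
                hnil2, hnjl1, h12, h21,
                s1, s2, s3, s4, s5, g1, g2, g3, g4, g5, g6, g7, g8,
                hij', hij'', hik_lt.ne, hik_lt.ne', hjk_lt.ne, hjk_lt.ne',
                hkl1_lt.ne, hkl1_lt.ne', hkl2_lt.ne, hkl2_lt.ne',
                hil1_lt.ne, hil1_lt.ne', hjl1_lt.ne, hjl1_lt.ne',
                hil2_lt.ne, hil2_lt.ne', hjl2_lt.ne, hjl2_lt.ne', hne12, hne12']
  · rintro (⟨k, l, hik, hjk, hkl, hInd | hInd⟩ | ⟨k, l1, l2, hik, hjk, hkl1, hkl2, hInd⟩)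
    · -- type 1 first : edges i→k, j→l, k→l
      have hEik : E i k := (hInd i (by simp) k (by simp)).mpr (Or.inl ⟨rfl, rfl⟩)
      have hEjl : E j l := (hInd j (by simp) l (by simp)).mpr (Or.inr (Or.inl ⟨rfl, rfl⟩))
      have hEkl : E k l := (hInd k (by simp) l (by simp)).mpr (Or.inr (Or.inr ⟨rfl, rfl⟩))
      have hnadjjk : ¬ Adj E j k := by
        rintro (h | h)
        · have := (hInd j (by simp) k (by simp)).mp h
          simp [hij, Ne.symm hij, hkl.ne, hjk.ne] at this
        · have := (hInd k (by simp) j (by simp)).mp h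
          simp [hik.ne', hjk.ne', (hjk.trans hkl).ne] at this
      exact Or.inr ⟨k, Or.inl hEik, Or.inr ⟨hjk, hnadjjk, l, hEjl, hEkl⟩⟩
    · -- type 1 second : edges i→l, j→k, k→l
      have hEil : E i l := (hInd i (by simp) l (by simp)).mpr (Or.inl ⟨rfl, rfl⟩)
      have hEjk : E j k := (hInd j (by simp) k (by simp)).mpr (Or.inr (Or.inl ⟨rfl, rfl⟩))
      have hEkl : E k l := (hInd k (by simp) l (by simp)).mpr (Or.inr (Or.inr ⟨rfl, rfl⟩))
      have hnadjik : ¬ Adj E i k := by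
        rintro (h | h)
        · have := (hInd i (by simp) k (by simp)).mp h
          simp [hij, hkl.ne, hik.ne] at this
        · have := (hInd k (by simp) i (by simp)).mp h
          simp [hik.ne', hjk.ne', (hik.trans hkl).ne] at this
      exact Or.inr ⟨k, Or.inr ⟨hik, hnadjik, l, hEil, hEkl⟩, Or.inl hEjk⟩
    · -- type 2 : edges i→l1, j→l2, k→l1, k→l2
      have hEil1 : E i l1 := (hInd i (by simp) l1 (by simp)).mpr (Or.inl ⟨rfl, rfl⟩)
      have hEjl2 : E j l2 := (hInd j (by simp) l2 (by simp)).mpr (Or.inr (Or.inl ⟨rfl, rfl⟩))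
      have hEkl1 : E k l1 := (hInd k (by simp) l1 (by simp)).mpr (Or.inr (Or.inr (Or.inl ⟨rfl, rfl⟩)))
      have hEkl2 : E k l2 := (hInd k (by simp) l2 (by simp)).mpr (Or.inr (Or.inr (Or.inr ⟨rfl, rfl⟩)))
      have hnadjik : ¬ Adj E i k := by
        rintro (h | h)
        · have := (hInd i (by simp) k (by simp)).mp h
          simp [hij, hkl1.ne, hkl2.ne, hik.ne] at this
        · have := (hInd k (by simp) i (by simp)).mp h
          simp [hik.ne', hjk.ne', (hik.trans hkl1).ne, (hik.trans hkl2).ne] at this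
      have hnadjjk : ¬ Adj E j k := by
        rintro (h | h)
        · have := (hInd j (by simp) k (by simp)).mp h
          simp [Ne.symm hij, hkl1.ne, hkl2.ne, hjk.ne] at this
        · have := (hInd k (by simp) j (by simp)).mp h
          simp [hik.ne', hjk.ne', (hjk.trans hkl1).ne, (hjk.trans hkl2).ne] at this
      exact Or.inr ⟨k, Or.inr ⟨hik, hnadjik, l1, hEil1, hEkl1⟩,
        Or.inr ⟨hjk, hnadjjk, l2, hEjl2, hEkl2⟩⟩
end

section
/- Let T be a CStree on three ordered variables X_1, X_2, X_3 that is balanced and such that the CI statement X_1 ⊥ X_2 holds in T (all level-1 vertices are in a single stage). Then T is the staged tree representation of a DAG; equivalently, its only minimal context is the empty context. -/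
open scoped Classical

/-- A CStree on ordered discrete variables `X_1, ..., X_p` with state spaces
`Fin (d i)`, encoded by its stage structure: `stage k x` is the stage of the
level-`k` vertex determined by the coordinates `x i`, `i < k` (governing the
conditional distribution of `X_k`).  Stages depend only on coordinates below `k`,
and every stage is a cylinder set determined by a context `C ⊆ {i | i < k}`. -/
structure CStree (p : ℕ) (d : Fin p → ℕ) where
  stage : Fin p → ((i : Fin p) → Fin (d i)) → ℕ
  stage_lower : ∀ (k : Fin p) (x y : (i : Fin p) → Fin (d i)),
    (∀ i : Fin p, (i : ℕ) < (k : ℕ) → x i = y i) → stage k x = stage k y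
  stage_cyl : ∀ (k : Fin p) (x : (i : Fin p) → Fin (d i)),
    ∃ C : Finset (Fin p), (∀ i ∈ C, (i : ℕ) < (k : ℕ)) ∧
      ∀ y, (stage k y = stage k x ↔ ∀ i ∈ C, y i = x i)

/-- The interpolating polynomial `t(v)` of the level-`j` vertex `v` determined by
`x i`, `i < j`: the sum over all leaf-continuations `z` of `v` of the product of the
formal edge labels `X (m, stage, outcome)` along the path. -/
noncomputable def tpoly {p : ℕ} {d : Fin p → ℕ} (T : CStree p d) (j : ℕ)
    (x : (i : Fin p) → Fin (d i)) : MvPolynomial (Fin p × ℕ × ℕ) ℝ :=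
  ∑ z : (i : Fin p) → Fin (d i),
    if ∀ i : Fin p, (i : ℕ) < j → z i = x i then
      ∏ m : Fin p, if j ≤ (m : ℕ) then MvPolynomial.X (m, T.stage m z, (z m : ℕ)) else 1
    else 0

/-- A CStree is balanced if for every pair `v, w` of same-stage level-`k` vertices and
all outcomes `s, r` of `X_k`, the interpolating polynomials of the corresponding
children satisfy `t(vs) t(wr) = t(vr) t(ws)`. -/
def IsBalanced {p : ℕ} {d : Fin p → ℕ} (T : CStree p d) : Prop :=
  ∀ (k : Fin p) (x y : (i : Fin p) → Fin (d i)), T.stage k x = T.stage k y →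
    ∀ s r : Fin (d k),
      tpoly T ((k : ℕ) + 1) (Function.update x k s) *
          tpoly T ((k : ℕ) + 1) (Function.update y k r) =
        tpoly T ((k : ℕ) + 1) (Function.update x k r) *
          tpoly T ((k : ℕ) + 1) (Function.update y k s)

/-- Let `T` be a balanced CStree on three ordered variables in which
`X_1 ⊥ X_2` holds, i.e. all level-1 vertices lie in a single stage.  Then `T` is the
staged tree representation of a DAG: there are order-respecting parent sets
`pa k ⊆ {i | i < k}` such that at every level the stage partition is exactly the
partition by the outcomes of the parent variables. -/
theorem stmt12 (d : Fin 3 → ℕ) (T : CStree 3 d)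
    (hbal : IsBalanced T)
    (h12 : ∀ x y : (i : Fin 3) → Fin (d i), T.stage 1 x = T.stage 1 y) :
    ∃ pa : Fin 3 → Finset (Fin 3),
      (∀ k : Fin 3, ∀ i ∈ pa k, (i : ℕ) < (k : ℕ)) ∧
      ∀ (k : Fin 3) (x y : (i : Fin 3) → Fin (d i)),
        (T.stage k x = T.stage k y ↔ ∀ i ∈ pa k, x i = y i) := by
  classical
  by_cases hne : Nonempty ((i : Fin 3) → Fin (d i))
  case neg =>
    exact ⟨fun _ => ∅, fun k i hi => absurd hi (Finset.notMem_empty i),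
      fun k x y => absurd ⟨x⟩ hne⟩
  obtain ⟨x₀⟩ := hne
  have hd2 : 0 < d 2 := (x₀ 2).pos
  -- the indicator-like weight function
  set f : ℕ → ℕ → ℝ := fun n0 n => if n = n0 then 2 else 1 with hf
  have fpos : ∀ n0 n, 0 < f n0 n := by
    intro n0 n; simp only [hf]; split_ifs <;> norm_num
  have ftwo : ∀ n0 n, f n0 n = 2 → n = n0 := by
    intro n0 n h; by_contra hn; simp only [hf, if_neg hn] at h; norm_num at h
  have fself : ∀ n0, f n0 n0 = 2 := by intro n0; simp [hf]
  have hcount : ∀ u : (i : Fin 3) → Fin (d i),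
      (Finset.univ.filter (fun z : (i : Fin 3) → Fin (d i) =>
        ∀ i : Fin 3, (i : ℕ) < 2 → z i = u i)).card = d 2 := by
    intro u
    rw [← Fintype.card_fin (d 2), ← Finset.card_univ]
    apply Finset.card_bij' (fun (z : (i : Fin 3) → Fin (d i)) _ => z 2)
      (fun c _ => Function.update u 2 c)
    · intro z hz; exact Finset.mem_univ _
    · intro c hc
      simp only [Finset.mem_filter, Finset.mem_univ, true_and]
      intro i hi
      apply Function.update_of_ne
      intro h; subst h; norm_num at hi
    · intro z hz
      simp only [Finset.mem_filter, Finset.mem_univ, true_and] at hz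
      funext i
      fin_cases i
      · show Function.update u 2 (z 2) 0 = z 0
        rw [Function.update_of_ne (by decide)]; exact (hz 0 (by norm_num)).symm
      · show Function.update u 2 (z 2) 1 = z 1
        rw [Function.update_of_ne (by decide)]; exact (hz 1 (by norm_num)).symm
      · show Function.update u 2 (z 2) 2 = z 2
        rw [Function.update_self]
    · intro c hc; rw [Function.update_self]
  have heval : ∀ (n0 : ℕ) (u : (i : Fin 3) → Fin (d i)),
      MvPolynomial.eval (fun q : Fin 3 × ℕ × ℕ => f n0 q.2.1) (tpoly T 2 u)
        = (d 2 : ℝ) * f n0 (T.stage 2 u) := by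
    intro n0 u
    unfold tpoly
    rw [map_sum]
    have step : ∀ z : (i : Fin 3) → Fin (d i),
        MvPolynomial.eval (fun q : Fin 3 × ℕ × ℕ => f n0 q.2.1)
          (if ∀ i : Fin 3, (i : ℕ) < 2 → z i = u i then
            ∏ m : Fin 3, if 2 ≤ (m : ℕ) then
              MvPolynomial.X (m, T.stage m z, (z m : ℕ)) else 1
          else 0)
        = if ∀ i : Fin 3, (i : ℕ) < 2 → z i = u i then f n0 (T.stage 2 u) else 0 := by
      intro z
      split_ifs with h
      · rw [map_prod, Fin.prod_univ_three,
          if_neg (show ¬(2 ≤ ((0 : Fin 3) : ℕ)) by decide),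
          if_neg (show ¬(2 ≤ ((1 : Fin 3) : ℕ)) by decide),
          if_pos (show 2 ≤ ((2 : Fin 3) : ℕ) by decide),
          map_one, one_mul, one_mul, MvPolynomial.eval_X,
          T.stage_lower 2 z u (fun i hi => h i hi)]
      · simp
    rw [Finset.sum_congr rfl fun z _ => step z]
    rw [← Finset.sum_filter, Finset.sum_const, hcount u, nsmul_eq_mul]
  have key : ∀ (n0 : ℕ) (x y : (i : Fin 3) → Fin (d i)) (s r : Fin (d 1)),
      f n0 (T.stage 2 (Function.update x 1 s)) * f n0 (T.stage 2 (Function.update y 1 r))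
        = f n0 (T.stage 2 (Function.update x 1 r)) * f n0 (T.stage 2 (Function.update y 1 s)) := by
    intro n0 x y s r
    have hb : tpoly T 2 (Function.update x 1 s) * tpoly T 2 (Function.update y 1 r)
        = tpoly T 2 (Function.update x 1 r) * tpoly T 2 (Function.update y 1 s) :=
      hbal 1 x y (h12 x y) s r
    have he := congrArg (fun q => MvPolynomial.eval (fun q : Fin 3 × ℕ × ℕ => f n0 q.2.1) q) hb
    simp only [map_mul] at he
    rw [heval, heval, heval, heval] at he
    have hd2' : ((d 2 : ℝ)) ^ 2 ≠ 0 :=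
      pow_ne_zero 2 (by exact_mod_cast hd2.ne')
    refine mul_left_cancel₀ hd2' ?_
    linear_combination he
  have claimA : ∀ (x y : (i : Fin 3) → Fin (d i)) (s r : Fin (d 1)),
      T.stage 2 (Function.update x 1 s) = T.stage 2 (Function.update x 1 r) →
      T.stage 2 (Function.update y 1 s) = T.stage 2 (Function.update y 1 r) := by
    intro x y s r h
    have hk := key (T.stage 2 (Function.update y 1 r)) x y s r
    rw [h] at hk
    have h2 := mul_left_cancel₀ (fpos _ _).ne' hk
    rw [fself] at h2
    exact ftwo _ _ h2.symm
  have claimB : ∀ (x y : (i : Fin 3) → Fin (d i)) (s r : Fin (d 1)),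
      T.stage 2 (Function.update x 1 s) = T.stage 2 (Function.update y 1 s) →
      T.stage 2 (Function.update x 1 r) = T.stage 2 (Function.update y 1 r) := by
    intro x y s r h
    have hk := key (T.stage 2 (Function.update x 1 r)) x y s r
    rw [h, mul_comm] at hk
    have h2 := mul_right_cancel₀ (fpos _ _).ne' hk
    rw [fself] at h2
    exact (ftwo _ _ h2).symm
  have σlow : ∀ z w : (i : Fin 3) → Fin (d i), z 0 = w 0 → z 1 = w 1 →
      T.stage 2 z = T.stage 2 w := by
    intro z w h0 h1
    apply T.stage_lower
    intro i hi
    fin_cases i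
    · exact h0
    · exact h1
    · norm_num at hi
  have fin01 : ∀ i : Fin 3, (i : ℕ) < 2 → i ≠ 0 → i = 1 := by decide
  have fin02 : ∀ i : Fin 3, (i : ℕ) < 2 → i ≠ 1 → i = 0 := by decide
  have L0 : ∀ x y : (i : Fin 3) → Fin (d i), x 0 ≠ y 0 → T.stage 2 x = T.stage 2 y →
      ∀ z w : (i : Fin 3) → Fin (d i), z 1 = w 1 → T.stage 2 z = T.stage 2 w := by
    intro x y hne0 heq
    obtain ⟨C, hC1, hC2⟩ := T.stage_cyl 2 x
    have h0C : (0 : Fin 3) ∉ C := fun h => hne0 (((hC2 y).1 heq.symm 0 h).symm)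
    have hyx : T.stage 2 (Function.update y 1 (x 1)) = T.stage 2 x := by
      apply (hC2 _).2
      intro i hi
      have hi1 : i = 1 := fin01 i (hC1 i hi) (fun h => h0C (h ▸ hi))
      subst hi1
      rw [Function.update_self]
    have hB : T.stage 2 (Function.update y 1 (x 1)) = T.stage 2 (Function.update x 1 (x 1)) := by
      refine hyx.trans (σlow _ _ ?_ ?_).symm
      · rw [Function.update_of_ne (by decide)]
      · rw [Function.update_self]
    intro z w hzw
    have hB' : T.stage 2 (Function.update y 1 (z 1)) = T.stage 2 (Function.update x 1 (z 1)) :=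
      claimB y x (x 1) (z 1) hB
    obtain ⟨C', hC1', hC2'⟩ := T.stage_cyl 2 (Function.update x 1 (z 1))
    have h0C' : (0 : Fin 3) ∉ C' := by
      intro h
      have h2 := (hC2' (Function.update y 1 (z 1))).1 hB' 0 h
      rw [Function.update_of_ne (by decide), Function.update_of_ne (by decide)] at h2
      exact hne0 h2.symm
    have hz : T.stage 2 z = T.stage 2 (Function.update x 1 (z 1)) := by
      apply (hC2' z).2
      intro i hi
      have hi1 : i = 1 := fin01 i (hC1' i hi) (fun h => h0C' (h ▸ hi))
      subst hi1
      rw [Function.update_self]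
    have hw : T.stage 2 w = T.stage 2 (Function.update x 1 (z 1)) := by
      apply (hC2' w).2
      intro i hi
      have hi1 : i = 1 := fin01 i (hC1' i hi) (fun h => h0C' (h ▸ hi))
      subst hi1
      rw [Function.update_self, ← hzw]
    exact hz.trans hw.symm
  have L1 : ∀ x y : (i : Fin 3) → Fin (d i), x 1 ≠ y 1 → T.stage 2 x = T.stage 2 y →
      ∀ z w : (i : Fin 3) → Fin (d i), z 0 = w 0 → T.stage 2 z = T.stage 2 w := by
    intro x y hne1 heq
    obtain ⟨C, hC1, hC2⟩ := T.stage_cyl 2 x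
    have h1C : (1 : Fin 3) ∉ C := fun h => hne1 (((hC2 y).1 heq.symm 1 h).symm)
    have hxx : T.stage 2 (Function.update x 1 (y 1)) = T.stage 2 x := by
      apply (hC2 _).2
      intro i hi
      have hi0 : i = 0 := fin02 i (hC1 i hi) (fun h => h1C (h ▸ hi))
      subst hi0
      rw [Function.update_of_ne (by decide)]
    have hA : T.stage 2 (Function.update x 1 (y 1)) = T.stage 2 (Function.update x 1 (x 1)) := by
      refine hxx.trans (σlow _ _ ?_ ?_).symm
      · rw [Function.update_of_ne (by decide)]
      · rw [Function.update_self]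
    intro z w hzw
    have hA' : T.stage 2 (Function.update z 1 (y 1)) = T.stage 2 (Function.update z 1 (x 1)) :=
      claimA x z (y 1) (x 1) hA
    obtain ⟨C', hC1', hC2'⟩ := T.stage_cyl 2 (Function.update z 1 (x 1))
    have h1C' : (1 : Fin 3) ∉ C' := by
      intro h
      have h2 := (hC2' (Function.update z 1 (y 1))).1 hA' 1 h
      rw [Function.update_self, Function.update_self] at h2
      exact hne1 h2.symm
    have hz : T.stage 2 z = T.stage 2 (Function.update z 1 (x 1)) := by
      apply (hC2' z).2
      intro i hi
      have hi0 : i = 0 := fin02 i (hC1' i hi) (fun h => h1C' (h ▸ hi))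
      subst hi0
      rw [Function.update_of_ne (by decide)]
    have hw : T.stage 2 w = T.stage 2 (Function.update z 1 (x 1)) := by
      apply (hC2' w).2
      intro i hi
      have hi0 : i = 0 := fin02 i (hC1' i hi) (fun h => h1C' (h ▸ hi))
      subst hi0
      rw [Function.update_of_ne (by decide)]
      exact hzw.symm
    exact hz.trans hw.symm
  have lvl0 : ∀ x y : (i : Fin 3) → Fin (d i), T.stage 0 x = T.stage 0 y := by
    intro x y
    apply T.stage_lower
    intro i hi
    norm_num at hi
  have build : ∀ P : Finset (Fin 3), (∀ i ∈ P, (i : ℕ) < 2) →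
      (∀ x y : (i : Fin 3) → Fin (d i), T.stage 2 x = T.stage 2 y ↔ ∀ i ∈ P, x i = y i) →
      (∃ pa : Fin 3 → Finset (Fin 3),
        (∀ k : Fin 3, ∀ i ∈ pa k, (i : ℕ) < (k : ℕ)) ∧
        ∀ (k : Fin 3) (x y : (i : Fin 3) → Fin (d i)),
          (T.stage k x = T.stage k y ↔ ∀ i ∈ pa k, x i = y i)) := by
    intro P hP hiff
    refine ⟨fun k => if (k : ℕ) = 2 then P else ∅, ?_, ?_⟩
    · intro k i hi
      beta_reduce at hi
      by_cases hk : (k : ℕ) = 2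
      · rw [if_pos hk] at hi; rw [hk]; exact hP i hi
      · rw [if_neg hk] at hi; exact absurd hi (Finset.notMem_empty i)
    · intro k x y
      beta_reduce
      fin_cases k
      · rw [if_neg (by norm_num)]
        exact ⟨fun _ i hi => absurd hi (Finset.notMem_empty i), fun _ => lvl0 x y⟩
      · rw [if_neg (by norm_num)]
        exact ⟨fun _ i hi => absurd hi (Finset.notMem_empty i), fun _ => h12 x y⟩
      · rw [if_pos (by norm_num)]
        exact hiff x y
  by_cases hd0 : ∃ z w : (i : Fin 3) → Fin (d i), z 1 = w 1 ∧ T.stage 2 z ≠ T.stage 2 w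
  · by_cases hd1 : ∃ z w : (i : Fin 3) → Fin (d i), z 0 = w 0 ∧ T.stage 2 z ≠ T.stage 2 w
    · refine build {0, 1} (by decide) ?_
      intro x y
      constructor
      · intro hst i hi
        rcases Finset.mem_insert.1 hi with rfl | hi
        · by_contra hne0
          obtain ⟨z, w, hzw, hnezw⟩ := hd0
          exact hnezw (L0 x y hne0 hst z w hzw)
        · rw [Finset.mem_singleton] at hi; subst hi
          by_contra hne1
          obtain ⟨z, w, hzw, hnezw⟩ := hd1
          exact hnezw (L1 x y hne1 hst z w hzw)
      · intro h
        exact σlow x y (h 0 (by simp)) (h 1 (by simp))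
    · refine build {0} (by decide) ?_
      intro x y
      constructor
      · intro hst i hi
        rw [Finset.mem_singleton] at hi; subst hi
        by_contra hne0
        obtain ⟨z, w, hzw, hnezw⟩ := hd0
        exact hnezw (L0 x y hne0 hst z w hzw)
      · intro h
        by_contra hnexy
        exact hd1 ⟨x, y, h 0 (Finset.mem_singleton_self 0), hnexy⟩
  · by_cases hd1 : ∃ z w : (i : Fin 3) → Fin (d i), z 0 = w 0 ∧ T.stage 2 z ≠ T.stage 2 w
    · refine build {1} (by decide) ?_
      intro x y
      constructor
      · intro hst i hi
        rw [Finset.mem_singleton] at hi; subst hi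
        by_contra hne1
        obtain ⟨z, w, hzw, hnezw⟩ := hd1
        exact hnezw (L1 x y hne1 hst z w hzw)
      · intro h
        by_contra hnexy
        exact hd0 ⟨x, y, h 1 (Finset.mem_singleton_self 1), hnexy⟩
    · refine build ∅ (by simp) ?_
      intro x y
      constructor
      · intro _ i hi; exact absurd hi (Finset.notMem_empty i)
      · intro _
        have e1 : T.stage 2 x = T.stage 2 (Function.update x 1 (y 1)) := by
          by_contra hne
          exact hd1 ⟨x, Function.update x 1 (y 1),
            (Function.update_of_ne (by decide) _ _).symm, hne⟩
        have e2 : T.stage 2 (Function.update x 1 (y 1)) = T.stage 2 y := by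
          by_contra hne
          exact hd0 ⟨Function.update x 1 (y 1), y, Function.update_self _ _ _, hne⟩
        exact e1.trans e2
end

section
/- If a CStree T is balanced, then for every context X_C = x_C the context subtree T_{X_C = x_C} is balanced. -/
open scoped Classical

/-- The interpolating polynomial, inside the context subtree `T_{X_C = x_C}`, of the
vertex of level `j` determined by `x i`, `i < j`: the sum over all context-consistent
leaf-continuations of the product of the edge labels at the non-contracted levels
(the levels outside `C`). -/
noncomputable def tctx {p : ℕ} {d : Fin p → ℕ} (T : CStree p d)
    (C : Finset (Fin p)) (xc : (i : Fin p) → Fin (d i)) (j : ℕ)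
    (x : (i : Fin p) → Fin (d i)) : MvPolynomial (Fin p × ℕ × ℕ) ℝ :=
  ∑ z : (i : Fin p) → Fin (d i),
    if (∀ i : Fin p, (i : ℕ) < j → z i = x i) ∧ (∀ i ∈ C, z i = xc i) then
      ∏ m : Fin p,
        if j ≤ (m : ℕ) ∧ m ∉ C then MvPolynomial.X (m, T.stage m z, (z m : ℕ)) else 1
    else 0

/-- Substitution killing the edge labels at contracted levels: a label at a level
`m ∈ C` is sent to `1` if its outcome is the context outcome `xc m`, and to `0`
otherwise; labels at other levels are kept. -/
noncomputable def ctxSubst {p : ℕ} (d : Fin p → ℕ) (C : Finset (Fin p))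
    (xc : (i : Fin p) → Fin (d i)) : (Fin p × ℕ × ℕ) → MvPolynomial (Fin p × ℕ × ℕ) ℝ :=
  fun v => if v.1 ∈ C then (if v.2.2 = (xc v.1 : ℕ) then 1 else 0) else MvPolynomial.X v

lemma tctx_eq_aeval_tpoly {p : ℕ} {d : Fin p → ℕ} (T : CStree p d)
    (C : Finset (Fin p)) (xc : (i : Fin p) → Fin (d i)) (j : ℕ)
    (x : (i : Fin p) → Fin (d i)) (hx : ∀ i ∈ C, x i = xc i) :
    MvPolynomial.aeval (ctxSubst d C xc) (tpoly T j x) = tctx T C xc j x := by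
  unfold tpoly tctx
  rw [map_sum]
  refine Finset.sum_congr rfl fun z _ => ?_
  by_cases h1 : ∀ i : Fin p, (i : ℕ) < j → z i = x i
  · rw [if_pos h1]
    by_cases h2 : ∀ i ∈ C, z i = xc i
    · rw [if_pos ⟨h1, h2⟩, map_prod]
      refine Finset.prod_congr rfl fun m _ => ?_
      by_cases hm : j ≤ (m : ℕ)
      · rw [if_pos hm, MvPolynomial.aeval_X]
        by_cases hmc : m ∈ C
        · rw [if_neg (fun h => h.2 hmc)]
          simp only [ctxSubst, if_pos hmc]
          rw [if_pos (congrArg Fin.val (h2 m hmc))]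
        · rw [if_pos ⟨hm, hmc⟩]
          simp only [ctxSubst, if_neg hmc]
      · rw [if_neg hm, if_neg (fun h => hm h.1), map_one]
    · rw [if_neg (fun h => h2 h.2), map_prod]
      push_neg at h2
      obtain ⟨i₀, hi₀C, hi₀⟩ := h2
      have hj : j ≤ (i₀ : ℕ) := by
        by_contra h
        exact hi₀ (((h1 i₀ (lt_of_not_ge h)).trans (hx i₀ hi₀C)))
      apply Finset.prod_eq_zero (Finset.mem_univ i₀)
      rw [if_pos hj, MvPolynomial.aeval_X]
      simp only [ctxSubst, if_pos hi₀C]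
      rw [if_neg (fun h => hi₀ (Fin.val_injective h))]
  · rw [if_neg h1, if_neg (fun h => h1 h.1), map_zero]

/-- If a CStree `T` is balanced, then for every context `X_C = x_C` the
context subtree `T_{X_C = x_C}` is balanced: for every non-contracted level `k ∉ C`,
every pair of context-consistent same-stage vertices `u, v` (the staging being
inherited from `T`) and all outcomes `s, r` of `X_k`, the interpolating polynomials of
the context subtree satisfy `t(us) t(vr) = t(ur) t(vs)`. -/
theorem stmt15 {p : ℕ} (d : Fin p → ℕ) (T : CStree p d) (hbal : IsBalanced T)
    (C : Finset (Fin p)) (xc : (i : Fin p) → Fin (d i)) :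
    ∀ k : Fin p, k ∉ C →
      ∀ u v : (i : Fin p) → Fin (d i),
        (∀ i ∈ C, u i = xc i) → (∀ i ∈ C, v i = xc i) →
        T.stage k u = T.stage k v →
        ∀ s r : Fin (d k),
          tctx T C xc ((k : ℕ) + 1) (Function.update u k s) *
              tctx T C xc ((k : ℕ) + 1) (Function.update v k r) =
            tctx T C xc ((k : ℕ) + 1) (Function.update u k r) *
              tctx T C xc ((k : ℕ) + 1) (Function.update v k s) := by
  intro k hk u v hu hv hst s r
  have hupd : ∀ (w : (i : Fin p) → Fin (d i)), (∀ i ∈ C, w i = xc i) →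
      ∀ t : Fin (d k), ∀ i ∈ C, Function.update w k t i = xc i := by
    intro w hw t i hi
    rw [Function.update_of_ne (by rintro rfl; exact hk hi)]
    exact hw i hi
  have h := congrArg (MvPolynomial.aeval (ctxSubst d C xc)) (hbal k u v hst s r)
  rw [map_mul, map_mul,
    tctx_eq_aeval_tpoly T C xc _ _ (hupd u hu s),
    tctx_eq_aeval_tpoly T C xc _ _ (hupd v hv r),
    tctx_eq_aeval_tpoly T C xc _ _ (hupd u hu r),
    tctx_eq_aeval_tpoly T C xc _ _ (hupd v hv s)] at h
  exact h
end

section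
/- Let G be a DAG on [p] and T a CStree on the same ordered variables whose CSI statements include all selected d-separation statements of G. Then every stage of the staged tree representation T_G of G is contained in a single stage of T; i.e., the stage partition of T coarsens that of T_G level by level. -/
open scoped Classical

/-- The predecessors `{i | i < k}` of `k` in the variable ordering. -/
def predSet (p : ℕ) (k : Fin p) : Finset (Fin p) :=
  Finset.univ.filter (fun i : Fin p => (i : ℕ) < (k : ℕ))

/-- `Jset T A B S C x` : the CSI statement `X_A ⊥ X_B | X_S, X_C = x_C` is implied by
the CStree `T`, i.e. belongs to the closure of the stage-defining statements of `T`
under the seven CSI axioms (symmetry, decomposition, weak union, contraction,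
intersection, specialization, absorption), together with extensionality in the
context outcome. -/
inductive Jset {p : ℕ} {d : Fin p → ℕ} (T : CStree p d) :
    Finset (Fin p) → Finset (Fin p) → Finset (Fin p) → Finset (Fin p) →
      ((i : Fin p) → Fin (d i)) → Prop
  | base (k : Fin p) (x : (i : Fin p) → Fin (d i)) (C : Finset (Fin p))
      (hC : ∀ i ∈ C, (i : ℕ) < (k : ℕ))
      (hcyl : ∀ y, (T.stage k y = T.stage k x ↔ ∀ i ∈ C, y i = x i)) :
      Jset T {k} (predSet p k \ C) ∅ C x
  | ext {A B S C x} (y) (hy : ∀ i ∈ C, y i = x i) :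
      Jset T A B S C x → Jset T A B S C y
  | symm {A B S C x} : Jset T A B S C x → Jset T B A S C x
  | decomposition {A B D S C x} : Jset T A (B ∪ D) S C x → Jset T A B S C x
  | weakUnion {A B D S C x} : Jset T A (B ∪ D) S C x → Jset T A B (S ∪ D) C x
  | contraction {A B D S C x} :
      Jset T A B (S ∪ D) C x → Jset T A D S C x → Jset T A (B ∪ D) S C x
  | inter {A B S D C x} :
      Jset T A B (S ∪ D) C x → Jset T A S (B ∪ D) C x → Jset T A (B ∪ S) D C x
  | specialization {A B S C x} (Tt : Finset (Fin p)) (hT : Tt ⊆ S) (y)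
      (hy : ∀ i ∈ C, y i = x i) :
      Jset T A B S C x → Jset T A B (S \ Tt) (Tt ∪ C) y
  | absorption {A B S C x} (Tt : Finset (Fin p)) (hT : Tt ⊆ C)
      (h : ∀ y, (∀ i ∈ C \ Tt, y i = x i) → Jset T A B S C y) :
      Jset T A B (S ∪ Tt) (C \ Tt) x

/-- A context `X_C = x_C` is a minimal context of `T` if some CSI statement with this
context is implied by `T` and no nonempty part of the context can be absorbed into the
conditioning set. -/
def MinCtx {p : ℕ} {d : Fin p → ℕ} (T : CStree p d) (C : Finset (Fin p))
    (x : (i : Fin p) → Fin (d i)) : Prop :=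
  ∃ A B S, Jset T A B S C x ∧
    ∀ Tt ⊆ C, Tt ≠ ∅ → ¬ Jset T A B (S ∪ Tt) (C \ Tt) x

/-- `pa` is a minimal I-MAP (with the inherited variable ordering) of the collection of
CI statements holding in `T` in the context `X_C = x_C`: the local Markov statements of
`pa` hold in the context, and no parent can be removed. -/
def IsMinIMAP {p : ℕ} {d : Fin p → ℕ} (T : CStree p d) (C : Finset (Fin p))
    (x : (i : Fin p) → Fin (d i)) (pa : Fin p → Finset (Fin p)) : Prop :=
  (∀ j : Fin p, j ∉ C → pa j ⊆ predSet p j \ C ∧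
      Jset T {j} ((predSet p j \ C) \ pa j) (pa j) C x) ∧
  (∀ j : Fin p, j ∉ C → ∀ i ∈ pa j,
      ¬ Jset T {j} ((predSet p j \ C) \ (pa j \ {i})) (pa j \ {i}) C x)

/-- A context DAG, given by its parent sets `pa` on the vertices outside `C`, is
perfect if any two parents of a common vertex are adjacent. -/
def IsPerfectPa {p : ℕ} (C : Finset (Fin p)) (pa : Fin p → Finset (Fin p)) : Prop :=
  ∀ j : Fin p, j ∉ C → ∀ a ∈ pa j, ∀ b ∈ pa j, a ≠ b → (a ∈ pa b ∨ b ∈ pa a)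



/-- Pairwise stage-invariance semantics: given the context `C = x` off `{i,j}`,
changing the coordinates `i, j` does not change the stages at levels `i` and `j`. -/
def tau {p : ℕ} {d : Fin p → ℕ} (T : CStree p d) (i j : Fin p)
    (C : Finset (Fin p)) (x : (l : Fin p) → Fin (d l)) : Prop :=
  ∀ u v : (l : Fin p) → Fin (d l),
    (∀ l ∈ C, l ≠ i → l ≠ j → u l = x l ∧ v l = x l) →
    (∀ l : Fin p, l ≠ i → l ≠ j → u l = v l) →
    T.stage i u = T.stage i v ∧ T.stage j u = T.stage j v

lemma tau_symm {p : ℕ} {d : Fin p → ℕ} (T : CStree p d) {i j : Fin p}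
    {C : Finset (Fin p)} {x : (l : Fin p) → Fin (d l)}
    (h : tau T i j C x) : tau T j i C x := by
  intro u v hm hd
  exact (h u v (fun l hl h1 h2 => hm l hl h2 h1)
    (fun l h1 h2 => hd l h2 h1)).symm

/-- Soundness of the CSI axioms with respect to the pairwise stage-invariance
semantics. -/
lemma tau_sound {p : ℕ} {d : Fin p → ℕ} (T : CStree p d)
    {A B S C : Finset (Fin p)} {x : (l : Fin p) → Fin (d l)}
    (h : Jset T A B S C x) :
    ∀ i ∈ A, ∀ j ∈ B, tau T i j C x := by
  induction h with
  | base k z C hC hcyl =>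
    intro i hi j hj u v hm hd
    have hik : i = k := Finset.mem_singleton.mp hi
    subst hik
    have hjk : (j : ℕ) < (i : ℕ) := by
      have := (Finset.mem_sdiff.mp hj).1
      simpa [predSet] using this
    have hjC : j ∉ C := (Finset.mem_sdiff.mp hj).2
    have hmx : ∀ l ∈ C, u l = z l ∧ v l = z l := by
      intro l hl
      refine hm l hl ?_ ?_
      · rintro rfl; exact absurd (hC l hl) (lt_irrefl _)
      · rintro rfl; exact hjC hl
    constructor
    · have hu : T.stage i u = T.stage i z := (hcyl u).mpr (fun l hl => (hmx l hl).1)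
      have hv : T.stage i v = T.stage i z := (hcyl v).mpr (fun l hl => (hmx l hl).2)
      rw [hu, hv]
    · refine T.stage_lower j u v (fun l hl => ?_)
      refine hd l ?_ ?_
      · rintro rfl; exact absurd (hl.trans hjk) (lt_irrefl _)
      · rintro rfl; exact absurd hl (lt_irrefl _)
  | ext y hy h ih =>
    intro i hi j hj u v hm hd
    refine ih i hi j hj u v (fun l hl h1 h2 => ?_) hd
    obtain ⟨h1', h2'⟩ := hm l hl h1 h2
    exact ⟨h1'.trans (hy l hl), h2'.trans (hy l hl)⟩
  | symm h ih =>
    intro i hi j hj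
    exact tau_symm T (ih j hj i hi)
  | decomposition h ih =>
    intro i hi j hj
    exact ih i hi j (Finset.mem_union_left _ hj)
  | weakUnion h ih =>
    intro i hi j hj
    exact ih i hi j (Finset.mem_union_left _ hj)
  | contraction h1 h2 ih1 ih2 =>
    intro i hi j hj
    rcases Finset.mem_union.mp hj with hj | hj
    · exact ih1 i hi j hj
    · exact ih2 i hi j hj
  | inter h1 h2 ih1 ih2 =>
    intro i hi j hj
    rcases Finset.mem_union.mp hj with hj | hj
    · exact ih1 i hi j hj
    · exact ih2 i hi j hj
  | specialization Tt hT y hy h ih =>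
    intro i hi j hj u v hm hd
    refine ih i hi j hj u v (fun l hl h1 h2 => ?_) hd
    obtain ⟨h1', h2'⟩ := hm l (Finset.mem_union_right _ hl) h1 h2
    exact ⟨h1'.trans (hy l hl), h2'.trans (hy l hl)⟩
  | @absorption A' B' S' C' x' Tt hT h ih =>
    intro i hi j hj u v hm hd
    classical
    set y : (l : Fin p) → Fin (d l) := fun l => if l ∈ C' \ Tt then x' l else u l with hy
    have hyx : ∀ l ∈ C' \ Tt, y l = x' l := by
      intro l hl
      simp only [hy]
      exact if_pos hl
    refine ih y hyx i hi j hj u v (fun l hl h1 h2 => ?_) hd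
    by_cases hlmem : l ∈ C' \ Tt
    · have hux := hm l hlmem h1 h2
      have hyl : y l = x' l := by simp only [hy]; exact if_pos hlmem
      rw [hyl]
      exact hux
    · have hyl : y l = u l := by simp only [hy]; exact if_neg hlmem
      rw [hyl]
      exact ⟨rfl, (hd l h1 h2).symm⟩

/-- Let `G` be a DAG on `[p]` given by order-respecting parent sets `pa`,
and let `T` be a CStree (on the same ordered variables) whose implied CSI statements
include all the selected d-separation statements
`X_k ⊥ X_{[k-1]∖pa(k)} | X_{pa(k)} = x_{pa(k)}` of `G`.  Then every stage
`S_{x_{pa(k)}}` of the staged tree representation of `G` is contained in a single stage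
of `T`: the stage partition of `T` coarsens that of `T_G`, level by level. -/
theorem stmt16 {p : ℕ} (d : Fin p → ℕ) (T : CStree p d)
    (pa : Fin p → Finset (Fin p))
    (hord : ∀ k : Fin p, ∀ i ∈ pa k, (i : ℕ) < (k : ℕ))
    (hJ : ∀ (k : Fin p) (x : (i : Fin p) → Fin (d i)),
      Jset T {k} (predSet p k \ pa k) ∅ (pa k) x) :
    ∀ (k : Fin p) (x y : (i : Fin p) → Fin (d i)),
      (∀ i ∈ pa k, y i = x i) → T.stage k y = T.stage k x := by
  intro k x y hxy
  classical
  have htau : ∀ b ∈ predSet p k \ pa k, tau T k b (pa k) x := by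
    intro b hb
    exact tau_sound T (hJ k x) k (Finset.mem_singleton_self k) b hb
  -- induct on the number of coordinates below `k` where `y` differs from `x`
  suffices H : ∀ n : ℕ, ∀ z : (i : Fin p) → Fin (d i),
      (∀ i ∈ pa k, z i = x i) →
      (Finset.univ.filter (fun i : Fin p => (i : ℕ) < (k : ℕ) ∧ z i ≠ x i)).card ≤ n →
      T.stage k z = T.stage k x by
    exact H _ y hxy le_rfl
  intro n
  induction n with
  | zero =>
    intro z hz hcard
    have hempty : (Finset.univ.filter
        (fun i : Fin p => (i : ℕ) < (k : ℕ) ∧ z i ≠ x i)) = ∅ :=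
      Finset.card_eq_zero.mp (Nat.le_zero.mp hcard)
    refine T.stage_lower k z x (fun i hik => ?_)
    by_contra hne
    have : i ∈ (Finset.univ.filter
        (fun i : Fin p => (i : ℕ) < (k : ℕ) ∧ z i ≠ x i)) :=
      Finset.mem_filter.mpr ⟨Finset.mem_univ i, hik, hne⟩
    rw [hempty] at this
    exact absurd this (Finset.notMem_empty i)
  | succ n ihn =>
    intro z hz hcard
    set Dset := (Finset.univ.filter
      (fun i : Fin p => (i : ℕ) < (k : ℕ) ∧ z i ≠ x i)) with hD
    by_cases hDe : Dset = ∅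
    · refine T.stage_lower k z x (fun i hik => ?_)
      by_contra hne
      have : i ∈ Dset :=
        Finset.mem_filter.mpr ⟨Finset.mem_univ i, hik, hne⟩
      rw [hDe] at this
      exact absurd this (Finset.notMem_empty i)
    · obtain ⟨b, hb⟩ := Finset.nonempty_iff_ne_empty.mpr hDe
      have hbk : (b : ℕ) < (k : ℕ) := ((Finset.mem_filter.mp hb).2).1
      have hbne : z b ≠ x b := ((Finset.mem_filter.mp hb).2).2
      have hbpa : b ∉ pa k := fun hmem => hbne (hz b hmem)
      have hbmem : b ∈ predSet p k \ pa k :=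
        Finset.mem_sdiff.mpr ⟨Finset.mem_filter.mpr ⟨Finset.mem_univ b, hbk⟩, hbpa⟩
      set z' : (i : Fin p) → Fin (d i) := Function.update z b (x b) with hz'
      have hkb : k ≠ b := by
        rintro rfl; exact absurd hbk (lt_irrefl _)
      have hstep : T.stage k z = T.stage k z' := by
        have := htau b hbmem z z'
          (fun l hl h1 h2 => by
            have hlz : z l = x l := hz l hl
            have : z' l = z l := Function.update_of_ne h2 _ z
            exact ⟨hlz, this.trans hlz⟩)
          (fun l h1 h2 => (Function.update_of_ne h2 _ z).symm)
        exact this.1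
      have hz'pa : ∀ i ∈ pa k, z' i = x i := by
        intro i hmem
        by_cases hib : i = b
        · subst hib; simp [hz']
        · rw [hz', Function.update_of_ne hib]; exact hz i hmem
      have hsubset : (Finset.univ.filter
          (fun i : Fin p => (i : ℕ) < (k : ℕ) ∧ z' i ≠ x i)) ⊆ Dset.erase b := by
        intro i hi
        have hi' := Finset.mem_filter.mp hi
        have hib : i ≠ b := by
          rintro rfl
          exact hi'.2.2 (by simp [hz'])
        refine Finset.mem_erase.mpr ⟨hib, ?_⟩
        have : z' i = z i := Function.update_of_ne hib _ z
        rw [this] at hi'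
        exact Finset.mem_filter.mpr ⟨Finset.mem_univ i, hi'.2.1, hi'.2.2⟩
      have hcard' : (Finset.univ.filter
          (fun i : Fin p => (i : ℕ) < (k : ℕ) ∧ z' i ≠ x i)).card ≤ n := by
        calc _ ≤ (Dset.erase b).card := Finset.card_le_card hsubset
        _ = Dset.card - 1 := Finset.card_erase_of_mem hb
        _ ≤ n := by omega
      rw [hstep]
      exact ihn z' hz'pa hcard'
end

section
/- Consider binary variables X_1, X_2, X_3 and a collection of CSI statements closed under the CSI axioms containing X_1 ⊥ X_{2,3} and X_2 ⊥ X_3 | X_1 = 0. If these statements are realized by the stage structure of a CStree with levels ordered 1,2,3, then the stage partition forces all four level-2 vertices 00, 01, 10, 11 into a single stage, and hence the CI statement X_3 ⊥ X_{1,2} holds — a statement not implied by the original two. Therefore no CStree has exactly the context DAG collection {G_∅ = ([3], {2→3}), G_{X_1=0} = ({2,3}, ∅)}. -/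
open scoped Classical

/-- For binary `X_1, X_2, X_3`: if the stage structure of a CStree
realizes `X_1 ⊥ X_{2,3}` (in particular `X_3 ⊥ X_1 | X_2`: level-2 vertices with the
same `X_2`-outcome are in the same stage) and `X_2 ⊥ X_3 | X_1 = 0` (level-2 vertices
with `X_1 = 0` are in the same stage), then all four level-2 vertices `00, 01, 10, 11`
lie in a single stage, so `X_3 ⊥ X_{1,2}` holds — a statement not implied by the two
given ones.  Consequently no CStree has exactly the context DAG collection
`{G_∅ = ([3], {2→3}), G_{X_1=0} = ({2,3}, ∅)}`, i.e. no CStree has its level-2 stage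
relation exactly generated by these two statements. -/
theorem stmt18 (T : CStree 3 (fun _ => 2))
    (h1 : ∀ x y : (i : Fin 3) → Fin 2, x 1 = y 1 → T.stage 2 x = T.stage 2 y)
    (h2 : ∀ x y : (i : Fin 3) → Fin 2, x 0 = 0 → y 0 = 0 → T.stage 2 x = T.stage 2 y) :
    (∀ x y : (i : Fin 3) → Fin 2, T.stage 2 x = T.stage 2 y) ∧
    ¬ ∃ T' : CStree 3 (fun _ => 2), ∀ x y : (i : Fin 3) → Fin 2,
        (T'.stage 2 x = T'.stage 2 y ↔ (x 1 = y 1 ∨ (x 0 = 0 ∧ y 0 = 0))) := by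
  constructor
  · intro x y
    have hx : T.stage 2 x = T.stage 2 (fun i => if i = 0 then 0 else x i) := by
      apply h1; simp
    have hy : T.stage 2 y = T.stage 2 (fun i => if i = 0 then 0 else y i) := by
      apply h1; simp
    have hm : T.stage 2 (fun i => if i = 0 then (0 : Fin 2) else x i)
        = T.stage 2 (fun i => if i = 0 then 0 else y i) := by
      apply h2 <;> simp
    rw [hx, hm, ← hy]
  · rintro ⟨T', hT'⟩
    have e1 : T'.stage 2 (fun _ => 0) = T'.stage 2 (fun i => if i = 1 then 1 else 0) :=
      (hT' _ _).2 (Or.inr (by simp))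
    have e2 : T'.stage 2 (fun i => if i = 1 then (1:Fin 2) else 0) = T'.stage 2 (fun _ => 1) :=
      (hT' _ _).2 (Or.inl (by simp))
    have e3 := (hT' (fun _ => (0:Fin 2)) (fun _ => 1)).1 (e1.trans e2)
    simp at e3
end
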